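/- For any bounded linear operator T between Banach spaces and all n ∈ ℕ, one has n^{1/2} · x_n(T) ≤ π_2(T), where π_2(T) is the absolutely 2-summing norm of T. -/

import Mathlib

open scoped ENNReal

instance : Fact ((1 : ℝ≥0∞) ≤ 2) := ⟨one_le_two⟩

/-- The sequence space `ℓ₂` of square-summable complex sequences. -/
noncomputable abbrev ellTwo : Type := lp (fun _ : ℕ => ℂ) 2

/-- The `n`-th approximation number: `a_n(T) = inf {‖T - F‖ : rank F < n}`. -/
noncomputable def approxNum {E F : Type*} [NormedAddCommGroup E] [NormedSpace ℂ E]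
    [NormedAddCommGroup F] [NormedSpace ℂ F] (T : E →L[ℂ] F) (n : ℕ) : ℝ :=
  sInf {r : ℝ | ∃ G : E →L[ℂ] F,
    Module.rank ℂ (LinearMap.range (G : E →ₗ[ℂ] F)) < (n : Cardinal) ∧ r = ‖T - G‖}

/-- The `n`-th Weyl number: `x_n(T) = sup {a_n(T ∘ A) : A : ℓ₂ → E, ‖A‖ ≤ 1}`. -/
noncomputable def weylNum {E F : Type*} [NormedAddCommGroup E] [NormedSpace ℂ E]
    [NormedAddCommGroup F] [NormedSpace ℂ F] (T : E →L[ℂ] F) (n : ℕ) : ℝ :=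
  sSup {r : ℝ | ∃ A : ellTwo →L[ℂ] E, ‖A‖ ≤ 1 ∧ r = approxNum (T.comp A) n}

/-- `C` is an absolutely 2-summing bound for `T`: for all finite families `x₁, …, x_k`,
`(∑ ‖T x_j‖²)^{1/2} ≤ C · sup_{‖x*‖ ≤ 1} (∑ |⟨x_j, x*⟩|²)^{1/2}`.
The 2-summing norm `π₂(T)` is the least such `C`. -/
def IsPi2Bound {E F : Type*} [NormedAddCommGroup E] [NormedSpace ℂ E]
    [NormedAddCommGroup F] [NormedSpace ℂ F] (T : E →L[ℂ] F) (C : ℝ) : Prop :=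
  ∀ (k : ℕ) (x : Fin k → E),
    (∑ j, ‖T (x j)‖ ^ 2) ^ ((1 : ℝ) / 2) ≤
      C * sSup {r : ℝ | ∃ f : E →L[ℂ] ℂ, ‖f‖ ≤ 1 ∧
        r = (∑ j, ‖f (x j)‖ ^ 2) ^ ((1 : ℝ) / 2)}

/-!
If `b < a_n(S)` for `S : H → F` on a Hilbert space, then `S` has norm `> b` on the orthogonal
complement of every subspace `K` of dimension `< n`: otherwise `S ∘ P_K` would be an approximation
of rank `< n` within `b`. Choosing unit vectors greedily gives an orthonormal family
`e₁, …, eₙ` with `‖S eⱼ‖ > b`. By Bessel's inequality an orthonormal family has weak `ℓ₂`-norm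
at most `1`, so a 2-summing bound `C` gives `n b² ≤ ∑ ‖S eⱼ‖² ≤ C²`. Apply this to `S = T ∘ A`
for each `A : ℓ₂ → E` with `‖A‖ ≤ 1`, which is 2-summing with the same bound.
-/

open Submodule ContinuousLinearMap

section Normed

variable {E F H : Type*} [NormedAddCommGroup E] [NormedSpace ℂ E]
  [NormedAddCommGroup F] [NormedSpace ℂ F]

theorem approxNum_le_norm_sub (S G : E →L[ℂ] F) {n : ℕ}
    (hG : Module.rank ℂ (LinearMap.range (G : E →ₗ[ℂ] F)) < n) :
    approxNum S n ≤ ‖S - G‖ :=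
  csInf_le ⟨0, by rintro _ ⟨G', -, rfl⟩; positivity⟩ ⟨G, hG, rfl⟩

noncomputable def weakL2Norm {k : ℕ} (x : Fin k → E) : ℝ :=
  sSup {r : ℝ | ∃ f : E →L[ℂ] ℂ, ‖f‖ ≤ 1 ∧ r = (∑ j, ‖f (x j)‖ ^ 2) ^ ((1 : ℝ) / 2)}

theorem weakL2Norm_nonneg {k : ℕ} (x : Fin k → E) : 0 ≤ weakL2Norm x :=
  Real.sSup_nonneg <| by rintro _ ⟨f, -, rfl⟩; positivity

theorem bddAbove_weakL2Norm {k : ℕ} (x : Fin k → E) :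
    BddAbove {r : ℝ | ∃ f : E →L[ℂ] ℂ, ‖f‖ ≤ 1 ∧ r = (∑ j, ‖f (x j)‖ ^ 2) ^ ((1 : ℝ) / 2)} := by
  refine ⟨(∑ j, ‖x j‖ ^ 2) ^ ((1 : ℝ) / 2), ?_⟩
  rintro _ ⟨f, hf, rfl⟩
  gcongr with j
  exact f.le_of_opNorm_le hf (x j) |>.trans_eq (one_mul _)

variable [NormedAddCommGroup H] [NormedSpace ℂ H]

theorem weakL2Norm_comp_le {k : ℕ} (A : H →L[ℂ] E) (hA : ‖A‖ ≤ 1) (x : Fin k → H) :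
    weakL2Norm (A ∘ x) ≤ weakL2Norm x := by
  refine Real.sSup_le ?_ (weakL2Norm_nonneg x)
  rintro _ ⟨f, hf, rfl⟩
  refine le_csSup (bddAbove_weakL2Norm x) ⟨f.comp A, ?_, rfl⟩
  calc ‖f.comp A‖ ≤ ‖f‖ * ‖A‖ := f.opNorm_comp_le A
    _ ≤ 1 := mul_le_one₀ hf (norm_nonneg A) hA

theorem IsPi2Bound.comp {T : E →L[ℂ] F} {C : ℝ} (hT : IsPi2Bound T C) (hC : 0 ≤ C)
    {A : H →L[ℂ] E} (hA : ‖A‖ ≤ 1) : IsPi2Bound (T.comp A) C := fun k x =>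
  (hT k (A ∘ x)).trans (mul_le_mul_of_nonneg_left (weakL2Norm_comp_le A hA x) hC)

end Normed

section Hilbert

variable {F H : Type*} [NormedAddCommGroup F] [NormedSpace ℂ F]
  [NormedAddCommGroup H] [InnerProductSpace ℂ H]

theorem approxNum_le_of_norm_comp_orthogonal_le (S : H →L[ℂ] F) (K : Submodule ℂ H)
    [K.HasOrthogonalProjection] {n : ℕ} (hK : Module.rank ℂ K < n) {b : ℝ}
    (hS : ‖S.comp Kᗮ.subtypeL‖ ≤ b) : approxNum S n ≤ b := by
  have hrank :
      Module.rank ℂ (LinearMap.range ((S.comp K.starProjection : H →L[ℂ] F) : H →ₗ[ℂ] F)) < n := by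
    have hP : LinearMap.range (K.starProjection : H →ₗ[ℂ] H) = K := K.range_starProjection
    have := LinearMap.lift_rank_comp_le_right (K.starProjection : H →ₗ[ℂ] H) (S : H →ₗ[ℂ] F)
    rw [LinearMap.rank, LinearMap.rank, hP] at this
    rw [← Cardinal.lift_lt, Cardinal.lift_natCast]
    exact this.trans_lt (by simpa using hK)
  have hsub :
      S - S.comp K.starProjection = (S.comp Kᗮ.subtypeL).comp Kᗮ.orthogonalProjectionOnto := by
    ext x
    simp [starProjection_orthogonal_val]
  calc approxNum S n ≤ ‖S - S.comp K.starProjection‖ := approxNum_le_norm_sub S _ hrank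
    _ ≤ ‖S.comp Kᗮ.subtypeL‖ * ‖Kᗮ.orthogonalProjectionOnto‖ := hsub ▸ opNorm_comp_le _ _
    _ ≤ b :=
      (mul_le_of_le_one_right (opNorm_nonneg _) (orthogonalProjectionOnto_norm_le Kᗮ)).trans hS

theorem exists_mem_orthogonal_lt_norm (S : H →L[ℂ] F) (K : Submodule ℂ H)
    [K.HasOrthogonalProjection] {n : ℕ} (hK : Module.rank ℂ K < n) {b : ℝ} (hb : 0 ≤ b)
    (hbS : b < approxNum S n) : ∃ e ∈ Kᗮ, ‖e‖ = 1 ∧ b < ‖S e‖ := by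
  by_contra! h
  refine hbS.not_ge (approxNum_le_of_norm_comp_orthogonal_le S K hK ?_)
  exact opNorm_le_of_unit_norm hb fun e he => h e e.2 he

theorem Orthonormal.snoc {𝕜 E : Type*} [RCLike 𝕜] [NormedAddCommGroup E]
    [InnerProductSpace 𝕜 E] {m : ℕ} {e : Fin m → E} (he : Orthonormal 𝕜 e) {v : E} (hv : ‖v‖ = 1)
    (hve : ∀ i, inner 𝕜 (e i) v = 0) : Orthonormal 𝕜 (Fin.snoc e v : Fin (m + 1) → E) := by
  rw [orthonormal_iff_ite] at he ⊢
  intro i j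
  induction i using Fin.lastCases <;> induction j using Fin.lastCases
  · simp [inner_self_eq_norm_sq_to_K, hv]
  · simp [inner_eq_zero_symm.mp (hve _), (Fin.castSucc_lt_last _).ne']
  · simp [hve, (Fin.castSucc_lt_last _).ne]
  · simpa [Fin.castSucc_inj] using he _ _

theorem exists_orthonormal_lt_norm (S : H →L[ℂ] F) {n : ℕ} {b : ℝ} (hb : 0 ≤ b)
    (hbS : b < approxNum S n) : ∃ e : Fin n → H, Orthonormal ℂ e ∧ ∀ j, b < ‖S (e j)‖ := by
  suffices ∀ m ≤ n, ∃ e : Fin m → H, Orthonormal ℂ e ∧ ∀ j, b < ‖S (e j)‖ from this n le_rfl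
  intro m hm
  induction m with
  | zero => exact ⟨Fin.elim0, ⟨fun i => i.elim0, fun i => i.elim0⟩, fun j => j.elim0⟩
  | succ m ih =>
    obtain ⟨e, he, hSe⟩ := ih (Nat.le_of_succ_le hm)
    set K := span ℂ (Set.range e)
    have : FiniteDimensional ℂ K := .span_of_finite ℂ (Set.finite_range e)
    have hK : Module.rank ℂ K < n := by
      rw [← Module.finrank_eq_rank]
      exact_mod_cast (finrank_range_le_card e).trans_lt (by simpa using hm)
    obtain ⟨v, hvK, hv, hSv⟩ := exists_mem_orthogonal_lt_norm S K hK hb hbS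
    refine ⟨Fin.snoc e v, he.snoc hv fun i => inner_right_of_mem_orthogonal
      (subset_span (Set.mem_range_self i)) hvK, Fin.lastCases ?_ fun j => ?_⟩
    · simpa using hSv
    · simpa using hSe j

end Hilbert

section Summing

variable {F H : Type*} [NormedAddCommGroup F] [NormedSpace ℂ F]
  [NormedAddCommGroup H] [InnerProductSpace ℂ H] [CompleteSpace H]

theorem Orthonormal.weakL2Norm_le_one {k : ℕ} {e : Fin k → H} (he : Orthonormal ℂ e) :
    weakL2Norm e ≤ 1 := by
  refine Real.sSup_le ?_ zero_le_one
  rintro _ ⟨f, hf, rfl⟩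
  set y := (InnerProductSpace.toDual ℂ H).symm f
  have hy : ‖y‖ ≤ 1 := by rwa [LinearIsometryEquiv.norm_map]
  have hBessel : ∑ j, ‖f (e j)‖ ^ 2 ≤ 1 := calc
    ∑ j, ‖f (e j)‖ ^ 2 = ∑ j, ‖inner ℂ (e j) y‖ ^ 2 := by
      simp_rw [norm_inner_symm (e _), y, InnerProductSpace.toDual_symm_apply]
    _ ≤ ‖y‖ ^ 2 := he.sum_inner_products_le y
    _ ≤ 1 := pow_le_one₀ (norm_nonneg y) hy
  exact Real.rpow_le_one (by positivity) hBessel (by norm_num)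

theorem IsPi2Bound.sqrt_mul_le_of_orthonormal {S : H →L[ℂ] F} {C : ℝ} (hS : IsPi2Bound S C)
    (hC : 0 ≤ C) {n : ℕ} {e : Fin n → H} (he : Orthonormal ℂ e) {b : ℝ} (hb : 0 ≤ b)
    (hSe : ∀ j, b ≤ ‖S (e j)‖) : (n : ℝ) ^ ((1 : ℝ) / 2) * b ≤ C := calc
  (n : ℝ) ^ ((1 : ℝ) / 2) * b = (∑ _j : Fin n, b ^ 2) ^ ((1 : ℝ) / 2) := by
    simp only [← Real.sqrt_eq_rpow, Finset.sum_const, Finset.card_univ, Fintype.card_fin,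
      nsmul_eq_mul, Real.sqrt_mul (Nat.cast_nonneg n), Real.sqrt_sq hb]
  _ ≤ (∑ j, ‖S (e j)‖ ^ 2) ^ ((1 : ℝ) / 2) := by gcongr with j; exact hSe j
  _ ≤ C * weakL2Norm e := hS n e
  _ ≤ C := mul_le_of_le_one_right hC he.weakL2Norm_le_one

theorem IsPi2Bound.sqrt_mul_approxNum_le {S : H →L[ℂ] F} {C : ℝ} (hS : IsPi2Bound S C)
    (hC : 0 ≤ C) (n : ℕ) : (n : ℝ) ^ ((1 : ℝ) / 2) * approxNum S n ≤ C := by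
  refine le_of_forall_lt_imp_le_of_dense fun c hc => ?_
  rcases lt_or_ge c 0 with hc0 | hc0
  · linarith
  rcases (Real.rpow_nonneg (Nat.cast_nonneg n) ((1 : ℝ) / 2)).eq_or_lt with hn | hn
  · rw [← hn, zero_mul] at hc
    linarith
  obtain ⟨e, he, hSe⟩ := exists_orthonormal_lt_norm S (div_nonneg hc0 hn.le)
    ((div_lt_iff₀' hn).mpr hc)
  have := hS.sqrt_mul_le_of_orthonormal hC he (div_nonneg hc0 hn.le) fun j => (hSe j).le
  rwa [mul_div_cancel₀ _ hn.ne'] at this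

end Summing

theorem Real.mul_sSup_le {a C : ℝ} {s : Set ℝ} (ha : 0 ≤ a) (hC : 0 ≤ C)
    (h : ∀ r ∈ s, a * r ≤ C) : a * sSup s ≤ C := by
  rw [← smul_eq_mul, ← Real.sSup_smul_of_nonneg ha]
  exact Real.sSup_le (by rintro _ ⟨r, hr, rfl⟩; exact h r hr) hC

theorem sqrt_n_mul_weylNum_le_pi2_general
    {E F : Type*} [NormedAddCommGroup E] [NormedSpace ℂ E]
    [NormedAddCommGroup F] [NormedSpace ℂ F]
    (T : E →L[ℂ] F) (C : ℝ) (hC : 0 ≤ C) (hbound : IsPi2Bound T C)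
    (n : ℕ) :
    (n : ℝ) ^ ((1 : ℝ) / 2) * weylNum T n ≤ C := by
  refine Real.mul_sSup_le (by positivity) hC ?_
  rintro _ ⟨A, hA, rfl⟩
  exact (hbound.comp hC hA).sqrt_mul_approxNum_le hC n

/-- Pietsch's inequality `n^{1/2} · x_n(T) ≤ π₂(T)`: for any bounded linear operator
`T` between Banach spaces and any absolutely 2-summing bound `C` for `T`,
`n^{1/2} · x_n(T) ≤ C` for all `n ≥ 1`. -/
theorem sqrt_n_mul_weylNum_le_pi2
    {E F : Type*} [NormedAddCommGroup E] [NormedSpace ℂ E] [CompleteSpace E]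
    [NormedAddCommGroup F] [NormedSpace ℂ F] [CompleteSpace F]
    (T : E →L[ℂ] F) (C : ℝ) (hC : 0 ≤ C) (hbound : IsPi2Bound T C)
    (n : ℕ) (hn : 1 ≤ n) :
    (n : ℝ) ^ ((1 : ℝ) / 2) * weylNum T n ≤ C :=
  sqrt_n_mul_weylNum_le_pi2_general T C hC hbound n
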